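/- For every y ∈ C one has (1⊗y)·E = (S_C(y)⊗1)·E, where the products are taken in the tensor product algebra B⊗C. Thus E is a separability idempotent in B⊗C with associated antipodal maps S_B and S_C. -/
import Mathlib


open scoped TensorProduct

/-- `ψ ⊗ id` followed by the identification `ℂ ⊗ N ≅ N`. -/
noncomputable def contrL {M N : Type*}
    [AddCommGroup M] [Module ℂ M] [AddCommGroup N] [Module ℂ N]
    (ψ : M →ₗ[ℂ] ℂ) : M ⊗[ℂ] N →ₗ[ℂ] N :=
  (TensorProduct.lid ℂ N).toLinearMap ∘ₗ TensorProduct.map ψ LinearMap.id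

lemma contrL_tmul {M N : Type*}
    [AddCommGroup M] [Module ℂ M] [AddCommGroup N] [Module ℂ N]
    (ψ : M →ₗ[ℂ] ℂ) (m : M) (n : N) :
    contrL ψ (m ⊗ₜ[ℂ] n) = ψ m • n := by
  simp [contrL]

lemma contrL_one_tmul_mul {B : Type*} [Ring B] [Algebra ℂ B]
    (ψ : B →ₗ[ℂ] ℂ) (y : Bᵐᵒᵖ) (t : B ⊗[ℂ] Bᵐᵒᵖ) :
    contrL ψ (((1 : B) ⊗ₜ[ℂ] y) * t) = y * contrL ψ t := by
  induction t using TensorProduct.induction_on with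
  | zero => simp
  | tmul a c => simp [Algebra.TensorProduct.tmul_mul_tmul, contrL_tmul, mul_smul_comm]
  | add a b ha hb => simp [mul_add, ha, hb]

lemma contrL_tmul_one_mul {B : Type*} [Ring B] [Algebra ℂ B]
    (ψ : B →ₗ[ℂ] ℂ) (s : B) (t : B ⊗[ℂ] Bᵐᵒᵖ) :
    contrL ψ ((s ⊗ₜ[ℂ] (1 : Bᵐᵒᵖ)) * t) = contrL (ψ ∘ₗ LinearMap.mulLeft ℂ s) t := by
  induction t using TensorProduct.induction_on with
  | zero => simp
  | tmul a c => simp [Algebra.TensorProduct.tmul_mul_tmul, contrL_tmul]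
  | add a b ha hb => simp [mul_add, ha, hb]

lemma contrL_faithful_zero {B : Type*} [Ring B] [Algebra ℂ B]
    (φ : B →ₗ[ℂ] ℂ)
    (hf1 : ∀ x : B, (∀ b : B, φ (x * b) = 0) → x = 0)
    (t : B ⊗[ℂ] Bᵐᵒᵖ)
    (h : ∀ x : B, contrL (φ ∘ₗ LinearMap.mulRight ℂ x) t = 0) : t = 0 := by
  classical
  set b := Module.Basis.ofVectorSpace ℂ Bᵐᵒᵖ
  obtain ⟨g, hg⟩ := TensorProduct.eq_repr_basis_right b t
  suffices hgz : g = 0 by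
    rw [← hg, hgz, Finsupp.sum_zero_index]
  ext i
  apply hf1
  intro x
  have hx := h x
  rw [← hg, map_finsuppSum] at hx
  simp only [contrL_tmul, LinearMap.comp_apply, LinearMap.mulRight_apply] at hx
  set hcoef : _ →₀ ℂ := g.mapRange (fun m => φ (m * x)) (by simp) with hco
  have hsum : Finsupp.linearCombination ℂ b hcoef = 0 := by
    rw [Finsupp.linearCombination_apply, hco,
      Finsupp.sum_mapRange_index (by intro i; simp)]
    exact hx
  have := linearIndependent_iff.mp b.linearIndependent hcoef hsum
  have := DFunLike.congr_fun this i
  simpa [hco, Finsupp.mapRange_apply] using this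

/-- With `C = Bᵐᵒᵖ`, `S_B(x) = xᵒᵖ`, `S_C = σ⁻¹∘S_B⁻¹`, `φ` a faithful functional
with modular automorphism `σ` and `E ∈ B⊗C` an idempotent with
`(φ(·x)⊗id)(E) = S_B(x)` for all `x`, one has `(1⊗y)·E = (S_C(y)⊗1)·E` for all `y ∈ C`,
so `E` is a separability idempotent with antipodal maps `S_B` and `S_C`. -/
theorem stmt7 {B : Type*} [Ring B] [Algebra ℂ B]
    (φ : B →ₗ[ℂ] ℂ)
    (hf1 : ∀ x : B, (∀ b : B, φ (x * b) = 0) → x = 0)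
    (hf2 : ∀ x : B, (∀ b : B, φ (b * x) = 0) → x = 0)
    (σ : B ≃ₐ[ℂ] B)
    (hmod : ∀ x₁ x₂ : B, φ (x₁ * x₂) = φ (x₂ * σ x₁))
    (E : B ⊗[ℂ] Bᵐᵒᵖ)
    (hEidem : E * E = E)
    (hsep : ∀ x : B,
      contrL (φ ∘ₗ LinearMap.mulRight ℂ x) E = MulOpposite.op x) :
    ∀ y : Bᵐᵒᵖ,
      ((1 : B) ⊗ₜ[ℂ] y) * E = (σ.symm y.unop ⊗ₜ[ℂ] (1 : Bᵐᵒᵖ)) * E := by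
  intro y
  rw [← sub_eq_zero]
  apply contrL_faithful_zero φ hf1
  intro x
  rw [map_sub, contrL_one_tmul_mul, contrL_tmul_one_mul, hsep]
  have hcomp : φ ∘ₗ (LinearMap.mulRight ℂ x ∘ₗ LinearMap.mulLeft ℂ (σ.symm y.unop))
      = φ ∘ₗ LinearMap.mulRight ℂ (x * y.unop) := by
    ext a
    simp only [LinearMap.comp_apply, LinearMap.mulRight_apply, LinearMap.mulLeft_apply]
    rw [mul_assoc, hmod (σ.symm y.unop) (a * x), AlgEquiv.apply_symm_apply, mul_assoc]
  rw [LinearMap.comp_assoc, hcomp, hsep]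
  rw [sub_eq_zero, ← MulOpposite.op_unop y, ← MulOpposite.op_mul]
  simp
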